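/- arXiv:1711.11297 — 5 statements merged into one kernel-verified Lean document; each statement's English description precedes it below -/
import Mathlib

section
/- Let g be a finite-dimensional Lie algebra over a field F of characteristic zero and let Δ be a local automorphism of g. Then Δ is bijective and its inverse Δ⁻¹ is also a local automorphism of g. -/
/-- A local automorphism `Δ` of a finite-dimensional Lie algebra over a field of
characteristic zero is bijective, and its inverse is also a local automorphism. -/
theorem localAut_inverse_localAut {F L : Type*} [Field F] [CharZero F]
    [LieRing L] [LieAlgebra F L] [FiniteDimensional F L]
    (Δ : L →ₗ[F] L)
    (hΔ : ∀ X : L, ∃ φ : L ≃ₗ⁅F⁆ L, Δ X = φ X) :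
    Function.Bijective Δ ∧
      ∃ Δinv : L →ₗ[F] L,
        (∀ x : L, Δinv (Δ x) = x) ∧ (∀ x : L, Δ (Δinv x) = x) ∧
          ∀ X : L, ∃ φ : L ≃ₗ⁅F⁆ L, Δinv X = φ X := by
  have hinj : Function.Injective Δ := by
    rw [← LinearMap.ker_eq_bot, LinearMap.ker_eq_bot']
    intro X hX
    obtain ⟨φ, hφ⟩ := hΔ X
    have : φ X = 0 := by rw [← hφ, hX]
    exact φ.toLinearEquiv.injective (by rw [map_zero]; exact this)
  have hbij : Function.Bijective Δ :=
    ⟨hinj, (LinearMap.injective_iff_surjective).mp hinj⟩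
  refine ⟨hbij, ?_⟩
  let e := LinearEquiv.ofBijective Δ hbij
  refine ⟨e.symm.toLinearMap, fun x => e.symm_apply_apply x,
    fun x => e.apply_symm_apply x, fun X => ?_⟩
  obtain ⟨φ, hφ⟩ := hΔ (e.symm X)
  refine ⟨φ.symm, ?_⟩
  have hX : X = φ (e.symm X) := by
    conv_lhs => rw [← e.apply_symm_apply X]
    exact hφ
  have := congrArg φ.symm hX
  simpa using this.symm
end

section
/- Let F be a field of characteristic zero and n ≥ 2. Every anti-automorphism of the Lie algebra sl_n(F) is a local automorphism of sl_n(F). -/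
open Polynomial Matrix

private lemma adjoinRoot_form {F : Type*} [Field F] (q : F[X]) (hq : q ≠ 0) :
    ∃ B : AdjoinRoot q →ₗ[F] AdjoinRoot q →ₗ[F] F,
      (∀ v, v ≠ 0 → ∃ w, B v w ≠ 0) ∧
      (∀ (p : F[X]) (v w : AdjoinRoot q),
        B (AdjoinRoot.mk q p * v) w = B v (AdjoinRoot.mk q p * w)) := by
  classical
  by_cases hd : q.natDegree = 0
  · -- `AdjoinRoot q` is trivial
    have hu : IsUnit q := by
      rw [Polynomial.eq_C_of_natDegree_eq_zero hd] at hq ⊢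
      exact isUnit_C.mpr (isUnit_iff_ne_zero.mpr (by simpa using hq))
    have : Subsingleton (AdjoinRoot q) := by
      refine Submodule.Quotient.subsingleton_iff.mpr ?_
      exact Ideal.span_singleton_eq_top.mpr hu
    exact ⟨0, fun v hv => absurd (Subsingleton.elim v 0) hv, by simp⟩
  · set pb := AdjoinRoot.powerBasis hq with hpb
    have hdim : pb.dim = q.natDegree := rfl
    have hd0 : 0 < pb.dim := by omega
    set ℓ : AdjoinRoot q →ₗ[F] F := pb.basis.coord ⟨pb.dim - 1, by omega⟩ with hℓ
    refine ⟨(LinearMap.mul F (AdjoinRoot q)).compr₂ ℓ, ?_, ?_⟩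
    · intro v hv
      set c := pb.basis.repr v with hc
      have hcne : c ≠ 0 := by
        simpa [hc] using (pb.basis.repr.map_ne_zero_iff).mpr hv
      have hne : c.support.Nonempty := Finsupp.support_nonempty_iff.mpr hcne
      set k := c.support.max' hne with hk
      have hkmem : k ∈ c.support := c.support.max'_mem hne
      refine ⟨pb.gen ^ (pb.dim - 1 - (k : ℕ)), ?_⟩
      have hv' : v = ∑ i : Fin pb.dim, c i • (pb.gen ^ (i : ℕ)) := by
        conv_lhs => rw [← pb.basis.sum_repr v]
        simp [PowerBasis.coe_basis, hc]
      have key : ℓ (v * pb.gen ^ (pb.dim - 1 - (k : ℕ))) = c k := by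
        rw [hv', Finset.sum_mul]
        simp_rw [smul_mul_assoc, ← pow_add]
        rw [map_sum]
        simp_rw [_root_.map_smul, smul_eq_mul]
        rw [Finset.sum_eq_single k]
        · have he : (k : ℕ) + (pb.dim - 1 - (k : ℕ)) = pb.dim - 1 := by
            have := k.isLt; omega
          rw [he]
          have hb : pb.gen ^ (pb.dim - 1) = pb.basis ⟨pb.dim - 1, by omega⟩ := by
            simp [PowerBasis.coe_basis]
          rw [hb, hℓ, Module.Basis.coord_apply, Module.Basis.repr_self, Finsupp.single_eq_same, mul_one]
        · intro j _ hjk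
          by_cases hjs : j ∈ c.support
          · have hjk' : (j : ℕ) < (k : ℕ) := by
              have hle : j ≤ k := Finset.le_max' _ _ hjs
              exact lt_of_le_of_ne hle (by simpa [Fin.ext_iff] using hjk)
            have hlt : (j : ℕ) + (pb.dim - 1 - (k : ℕ)) < pb.dim - 1 := by
              have := k.isLt; omega
            have hb : pb.gen ^ ((j : ℕ) + (pb.dim - 1 - (k : ℕ)))
                = pb.basis ⟨(j : ℕ) + (pb.dim - 1 - (k : ℕ)), by omega⟩ := by
              simp [PowerBasis.coe_basis]
            rw [hb, hℓ, Module.Basis.coord_apply, Module.Basis.repr_self, Finsupp.single_apply,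
              if_neg (by simp [Fin.ext_iff]; omega), mul_zero]
          · rw [Finsupp.notMem_support_iff.mp hjs, zero_mul]
        · intro hk'; exact absurd (Finset.mem_univ k) hk'
      rw [LinearMap.compr₂_apply, LinearMap.mul_apply']
      rw [key]
      exact Finsupp.mem_support_iff.mp hkmem
    · intro p v w
      simp only [LinearMap.compr₂_apply, LinearMap.mul_apply']
      congr 1
      ring

private lemma exists_selfadjoint_form {F : Type u} [Field F] (M : Type u)
    [AddCommGroup M] [Module F M] [Module F[X] M] [IsScalarTower F F[X] M]
    [Module.Finite F[X] M] (ht : Module.IsTorsion F[X] M) :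
    ∃ B : M →ₗ[F] M →ₗ[F] F,
      (∀ v, v ≠ 0 → ∃ w, B v w ≠ 0) ∧
      (∀ v w : M, B ((X : F[X]) • v) w = B v ((X : F[X]) • w)) := by
  classical
  obtain ⟨ι, hι, p, hp, e, ⟨f⟩⟩ := Module.equiv_directSum_of_isTorsion ht
  let g : M ≃ₗ[F[X]] ∀ i, F[X] ⧸ (F[X] ∙ p i ^ e i) :=
    f.trans (DirectSum.linearEquivFunOnFintype F[X] ι _)
  let G : M ≃ₗ[F] ∀ i, F[X] ⧸ (F[X] ∙ p i ^ e i) := g.restrictScalars F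
  choose B hB1 hB2 using fun i =>
    adjoinRoot_form (p i ^ e i) (pow_ne_zero _ (hp i).ne_zero)
  let L : ∀ i, M →ₗ[F] AdjoinRoot (p i ^ e i) := fun i =>
    (LinearMap.proj i).comp (G : M →ₗ[F] ∀ i, F[X] ⧸ (F[X] ∙ p i ^ e i))
  refine ⟨∑ i, (B i).compl₁₂ (L i) (L i), ?_, ?_⟩
  · intro v hv
    have hGv : G v ≠ 0 := by
      intro h; exact hv (by simpa using congrArg G.symm h)
    obtain ⟨i, hi⟩ := Function.ne_iff.mp hGv
    obtain ⟨w', hw'⟩ := hB1 i (G v i) (by exact hi)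
    refine ⟨G.symm (Pi.single i w'), ?_⟩
    have happ : ∀ u z : M, (∑ j, (B j).compl₁₂ (L j) (L j)) u z
        = ∑ j, B j (G u j) (G z j) := by
      intro u z
      simp only [LinearMap.sum_apply, LinearMap.compl₁₂_apply, L]
      rfl
    have hsymm : G (G.symm (Pi.single i w')) = Pi.single i w' := G.apply_symm_apply _
    rw [happ, Finset.sum_eq_single i]
    · rw [hsymm]; erw [Pi.single_eq_same]; exact hw'
    · intro j _ hj
      rw [hsymm]; erw [Pi.single_eq_of_ne hj]
      exact map_zero _
    · intro h; exact absurd (Finset.mem_univ i) h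
  · intro v w
    simp only [LinearMap.sum_apply, LinearMap.compl₁₂_apply]
    refine Finset.sum_congr rfl fun i _ => ?_
    have h1 : ∀ u : M, L i ((X : F[X]) • u)
        = AdjoinRoot.mk (p i ^ e i) X * (L i u) := by
      intro u
      show (g ((X : F[X]) • u)) i = _
      rw [_root_.map_smul]; rfl
    rw [h1 v, h1 w]
    exact hB2 i X (L i v) (L i w)

private lemma similar_transpose {F : Type u} [Field F] {m : Type} [Fintype m] [DecidableEq m]
    (Z : Matrix m m F) : ∃ g : Matrix m m F, IsUnit g ∧ g * Z = Zᵀ * g := by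
  classical
  set f : (m → F) →ₗ[F] (m → F) := Z.mulVecLin with hf
  obtain ⟨B, hB1, hB2⟩ := exists_selfadjoint_form (Module.AEval' f)
    (Module.AEval.isTorsion_of_finiteDimensional F (m → F) f)
  set of := Module.AEval.of F (m → F) f with hof
  set B' : (m → F) →ₗ[F] (m → F) →ₗ[F] F :=
    B.compl₁₂ (of : (m → F) →ₗ[F] Module.AEval' f) (of : (m → F) →ₗ[F] Module.AEval' f) with hB'
  have hB'1 : ∀ v : m → F, v ≠ 0 → ∃ w, B' v w ≠ 0 := by
    intro v hv
    obtain ⟨w, hw⟩ := hB1 (of v) (by simpa using of.map_ne_zero_iff.mpr hv)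
    exact ⟨of.symm w, by simpa [hB', LinearMap.compl₁₂_apply] using hw⟩
  have hB'sa : ∀ v w : m → F, B' (f v) w = B' v (f w) := by
    intro v w
    have h1 : of (f v) = (X : F[X]) • of v := (Module.AEval.X_smul_of f v).symm
    have h2 : of (f w) = (X : F[X]) • of w := (Module.AEval.X_smul_of f w).symm
    simp only [hB', LinearMap.compl₁₂_apply, LinearEquiv.coe_coe]
    rw [h1, h2]
    exact hB2 (of v) (of w)
  set G : Matrix m m F := Matrix.of (fun i j => B' (Pi.single i 1) (Pi.single j 1)) with hG
  have hGB : ∀ u v : m → F, B' u v = u ⬝ᵥ (G *ᵥ v) := by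
    intro u v
    have hu : u = ∑ i, u i • (Pi.single i (1 : F) : m → F) := by
      ext j; simp [Pi.single_apply]
    have hvv : v = ∑ j, v j • (Pi.single j (1 : F) : m → F) := by
      ext j; simp [Pi.single_apply]
    calc B' u v
        = B' (∑ i, u i • (Pi.single i (1 : F) : m → F))
            (∑ j, v j • (Pi.single j (1 : F) : m → F)) := by
          rw [← hu, ← hvv]
      _ = ∑ i, ∑ j, u i * (B' (Pi.single i 1) (Pi.single j 1) * v j) := by
          rw [map_sum]
          simp only [LinearMap.sum_apply, _root_.map_smul, LinearMap.smul_apply, smul_eq_mul,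
            map_sum, Finset.mul_sum]
          rw [Finset.sum_comm]
          exact Finset.sum_congr rfl fun i _ => Finset.sum_congr rfl fun j _ => by ring
      _ = u ⬝ᵥ (G *ᵥ v) := by
          simp [dotProduct, Matrix.mulVec, hG, Finset.mul_sum]
  have hnd : G.SeparatingLeft := by
    rw [Matrix.separatingLeft_def]; intro v hv
    by_contra hvne
    obtain ⟨w, hw⟩ := hB'1 v hvne
    exact hw (by rw [hGB]; exact hv w)
  have hGu : IsUnit G :=
    (Matrix.isUnit_iff_isUnit_det G).mpr
      (isUnit_iff_ne_zero.mpr (Matrix.separatingLeft_iff_det_ne_zero.mp hnd))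
  refine ⟨G, hGu, ?_⟩
  ext i j
  have e1 : (G * Z) i j = B' (Pi.single i 1) (f (Pi.single j 1)) := by
    rw [hGB]
    simp [hf, Matrix.mulVecLin, Matrix.mulVec, dotProduct, Pi.single_apply, Finset.mul_sum,
      Matrix.mul_apply, mul_comm]
  have e2 : (Zᵀ * G) i j = B' (f (Pi.single i 1)) (Pi.single j 1) := by
    rw [hGB]
    simp [hf, Matrix.mulVecLin, Matrix.mulVec, dotProduct, Pi.single_apply, Finset.mul_sum,
      Matrix.mul_apply, Matrix.transpose_apply, mul_comm]
  rw [e1, e2, hB'sa]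


open LieAlgebra.SpecialLinear

/-- Every anti-automorphism of `sl n F` is a local automorphism. -/
theorem antiAut_is_localAut_sl {F : Type*} [Field F] [CharZero F]
    (n : ℕ) (hn : 2 ≤ n)
    (ψ : sl (Fin n) F →ₗ[F] sl (Fin n) F)
    (hbij : Function.Bijective ψ)
    (hanti : ∀ x y : sl (Fin n) F, ψ ⁅x, y⁆ = ⁅ψ y, ψ x⁆) :
    ∀ X : sl (Fin n) F, ∃ φ : sl (Fin n) F ≃ₗ⁅F⁆ sl (Fin n) F, ψ X = φ X := by
  classical
  -- the automorphism `θ = -ψ`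
  have hθbij : Function.Bijective ⇑(-ψ) := by
    have h : ⇑(-ψ) = (fun z : sl (Fin n) F => -z) ∘ ⇑ψ := by ext x; simp
    rw [h]
    exact (neg_involutive.bijective).comp hbij
  let θlin : sl (Fin n) F ≃ₗ[F] sl (Fin n) F := LinearEquiv.ofBijective (-ψ) hθbij
  let θ : sl (Fin n) F ≃ₗ⁅F⁆ sl (Fin n) F :=
    { toLinearMap := (-ψ : sl (Fin n) F →ₗ[F] sl (Fin n) F)
      map_lie' := by
        intro x y
        show -ψ ⁅x, y⁆ = ⁅-ψ x, -ψ y⁆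
        rw [hanti, neg_lie, lie_neg, neg_neg, lie_skew]
      invFun := θlin.symm
      left_inv := θlin.left_inv
      right_inv := θlin.right_inv }
  intro X
  -- the matrix `Z := θ X` and a conjugation realizing `Z ↦ Zᵀ`
  set Zm : Matrix (Fin n) (Fin n) F := -(((ψ X : sl (Fin n) F) : Matrix (Fin n) (Fin n) F))
    with hZm
  obtain ⟨G, hGu, hGZ⟩ := similar_transpose Zm
  obtain ⟨gu, hg⟩ := hGu
  set a : Matrix (Fin n) (Fin n) F := ((gu⁻¹ : (Matrix (Fin n) (Fin n) F)ˣ) :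
    Matrix (Fin n) (Fin n) F) with ha
  set b : Matrix (Fin n) (Fin n) F := (gu : Matrix (Fin n) (Fin n) F) with hb
  have hab : a * b = 1 := by rw [ha, hb, Units.inv_mul]
  have hba : b * a = 1 := by rw [ha, hb, Units.mul_inv]
  have hbG : b = G := hg
  have hkey : a * Zmᵀ * b = Zm := by
    have h1 : Zmᵀ * b = b * Zm := by rw [hbG]; exact hGZ.symm
    calc a * Zmᵀ * b = a * (Zmᵀ * b) := by rw [mul_assoc]
      _ = a * (b * Zm) := by rw [h1]
      _ = (a * b) * Zm := by rw [mul_assoc]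
      _ = Zm := by rw [hab, one_mul]
  -- membership helper
  have memsl : ∀ A : Matrix (Fin n) (Fin n) F, A ∈ sl (Fin n) F ↔ A.trace = 0 := fun A => Iff.rfl
  -- cancellation helpers
  have hc1 : ∀ t : Matrix (Fin n) (Fin n) F, b * (a * t) = t := by
    intro t; rw [← mul_assoc, hba, one_mul]
  have hc2 : ∀ t : Matrix (Fin n) (Fin n) F, a * (b * t) = t := by
    intro t; rw [← mul_assoc, hab, one_mul]
  have htab : bᵀ * aᵀ = 1 := by rw [← transpose_mul, hab, transpose_one]
  have htba : aᵀ * bᵀ = 1 := by rw [← transpose_mul, hba, transpose_one]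
  have hc3 : ∀ t : Matrix (Fin n) (Fin n) F, aᵀ * (bᵀ * t) = t := by
    intro t; rw [← mul_assoc, htba, one_mul]
  have hc4 : ∀ t : Matrix (Fin n) (Fin n) F, bᵀ * (aᵀ * t) = t := by
    intro t; rw [← mul_assoc, htab, one_mul]
  -- the automorphism `τ : Y ↦ -(a * Yᵀ * b)`, with inverse `W ↦ -(aᵀ * Wᵀ * bᵀ)`
  have mem1 : ∀ Y : sl (Fin n) F,
      -(a * ((Y : Matrix (Fin n) (Fin n) F))ᵀ * b) ∈ sl (Fin n) F := by
    intro Y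
    rw [memsl, trace_neg, trace_mul_cycle, hba, one_mul, trace_transpose]
    rw [(memsl _).mp Y.2, neg_zero]
  have mem2 : ∀ Y : sl (Fin n) F,
      -(aᵀ * ((Y : Matrix (Fin n) (Fin n) F))ᵀ * bᵀ) ∈ sl (Fin n) F := by
    intro Y
    rw [memsl, trace_neg, trace_mul_cycle, htab, one_mul, trace_transpose]
    rw [(memsl _).mp Y.2, neg_zero]
  let τfun : sl (Fin n) F → sl (Fin n) F := fun Y =>
    ⟨-(a * ((Y : Matrix (Fin n) (Fin n) F))ᵀ * b), mem1 Y⟩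
  let σfun : sl (Fin n) F → sl (Fin n) F := fun W =>
    ⟨-(aᵀ * ((W : Matrix (Fin n) (Fin n) F))ᵀ * bᵀ), mem2 W⟩
  have hτσ : ∀ Y, σfun (τfun Y) = Y := by
    intro Y
    apply Subtype.ext
    show -(aᵀ * (-(a * ((Y : Matrix (Fin n) (Fin n) F))ᵀ * b))ᵀ * bᵀ)
        = (Y : Matrix (Fin n) (Fin n) F)
    simp only [transpose_neg, transpose_mul, transpose_transpose, mul_neg, neg_mul, neg_neg,
      mul_assoc, htba, hab, hba, htab, mul_one, hc1, hc2, hc3, hc4]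
  have hστ : ∀ W, τfun (σfun W) = W := by
    intro W
    apply Subtype.ext
    show -(a * (-(aᵀ * ((W : Matrix (Fin n) (Fin n) F))ᵀ * bᵀ))ᵀ * b)
        = (W : Matrix (Fin n) (Fin n) F)
    simp only [transpose_neg, transpose_mul, transpose_transpose, mul_neg, neg_mul, neg_neg,
      mul_assoc, htba, hab, hba, htab, mul_one, hc1, hc2, hc3, hc4]
  have hmulτ : ∀ x y : Matrix (Fin n) (Fin n) F,
      (-(a * xᵀ * b)) * (-(a * yᵀ * b)) = a * (y * x)ᵀ * b := by
    intro x y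
    simp only [neg_mul_neg, transpose_mul, mul_assoc, hc1]
  let τlin : sl (Fin n) F →ₗ[F] sl (Fin n) F :=
    { toFun := τfun
      map_add' := by
        intro x y
        apply Subtype.ext
        show -(a * (((x + y : sl (Fin n) F) : Matrix (Fin n) (Fin n) F))ᵀ * b)
            = -(a * ((x : Matrix (Fin n) (Fin n) F))ᵀ * b)
              + -(a * ((y : Matrix (Fin n) (Fin n) F))ᵀ * b)
        have : ((x + y : sl (Fin n) F) : Matrix (Fin n) (Fin n) F)
            = (x : Matrix (Fin n) (Fin n) F) + (y : Matrix (Fin n) (Fin n) F) := rfl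
        rw [this, transpose_add, mul_add, add_mul, neg_add]
      map_smul' := by
        intro c x
        apply Subtype.ext
        show -(a * (((c • x : sl (Fin n) F) : Matrix (Fin n) (Fin n) F))ᵀ * b)
            = c • (-(a * ((x : Matrix (Fin n) (Fin n) F))ᵀ * b))
        have : ((c • x : sl (Fin n) F) : Matrix (Fin n) (Fin n) F)
            = c • (x : Matrix (Fin n) (Fin n) F) := rfl
        rw [this, transpose_smul, mul_smul_comm, smul_mul_assoc, smul_neg] }
  let τ : sl (Fin n) F ≃ₗ⁅F⁆ sl (Fin n) F :=
    { toLinearMap := τlin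
      map_lie' := by
        intro x y
        apply Subtype.ext
        have hxy : ((⁅x, y⁆ : sl (Fin n) F) : Matrix (Fin n) (Fin n) F)
            = (x : Matrix (Fin n) (Fin n) F) * (y : Matrix (Fin n) (Fin n) F)
              - (y : Matrix (Fin n) (Fin n) F) * (x : Matrix (Fin n) (Fin n) F) := rfl
        show -(a * (((⁅x, y⁆ : sl (Fin n) F) : Matrix (Fin n) (Fin n) F))ᵀ * b)
            = ((⁅τfun x, τfun y⁆ : sl (Fin n) F) : Matrix (Fin n) (Fin n) F)
        have hrhs : ((⁅τfun x, τfun y⁆ : sl (Fin n) F) : Matrix (Fin n) (Fin n) F)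
            = (-(a * ((x : Matrix (Fin n) (Fin n) F))ᵀ * b))
                * (-(a * ((y : Matrix (Fin n) (Fin n) F))ᵀ * b))
              - (-(a * ((y : Matrix (Fin n) (Fin n) F))ᵀ * b))
                * (-(a * ((x : Matrix (Fin n) (Fin n) F))ᵀ * b)) := rfl
        rw [hrhs, hmulτ, hmulτ, hxy, transpose_sub, mul_sub, sub_mul, neg_sub]
      invFun := σfun
      left_inv := hτσ
      right_inv := hστ }
  refine ⟨θ.trans τ, ?_⟩
  apply Subtype.ext
  have hθX : ((θ X : sl (Fin n) F) : Matrix (Fin n) (Fin n) F) = Zm := by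
    show (((-ψ) X : sl (Fin n) F) : Matrix (Fin n) (Fin n) F) = Zm
    rw [hZm]
    simp
  have happ : ((θ.trans τ) X : sl (Fin n) F) = τfun (θ X) := rfl
  rw [happ]
  show ((ψ X : sl (Fin n) F) : Matrix (Fin n) (Fin n) F)
      = -(a * (((θ X : sl (Fin n) F) : Matrix (Fin n) (Fin n) F))ᵀ * b)
  rw [hθX, hkey, hZm, neg_neg]
end

section
/- Let F be an algebraically closed field of characteristic zero and let Δ be a local automorphism of sl_2(F) satisfying Δ(h) = h. Then either there exists λ ∈ F, λ ≠ 0, such that Δ(e) = λe, Δ(f) = λ⁻¹f and Δ(h) = h, or there exists μ ∈ F, μ ≠ 0, such that Δ(e) = μf, Δ(f) = μ⁻¹e and Δ(h) = h. -/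
open LieAlgebra.SpecialLinear Matrix

/-- The standard basis element `e = E₁₂` of `sl₂`. -/
def sl2E (F : Type*) [Field F] : sl (Fin 2) F :=
  LieAlgebra.SpecialLinear.single (R := F) (0 : Fin 2) 1 (by decide) 1

/-- The standard basis element `f = E₂₁` of `sl₂`. -/
def sl2F (F : Type*) [Field F] : sl (Fin 2) F :=
  LieAlgebra.SpecialLinear.single (R := F) (1 : Fin 2) 0 (by decide) 1

/-- The standard basis element `h = E₁₁ - E₂₂` of `sl₂`. -/
def sl2H (F : Type*) [Field F] : sl (Fin 2) F :=
  ⟨Matrix.single 0 0 1 - Matrix.single 1 1 1, by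
    show _ ∈ LinearMap.ker (Matrix.traceLinearMap (Fin 2) F F)
    rw [LinearMap.mem_ker]
    simp [Matrix.traceLinearMap, Matrix.trace, Fin.sum_univ_two,
      Matrix.single]⟩

section Aux
variable {F : Type*} [Field F]


@[simp] lemma sl2E_val (i j : Fin 2) : (sl2E F).val i j = if i = 0 ∧ j = 1 then 1 else 0 := by
  fin_cases i <;> fin_cases j <;> simp [sl2E, Matrix.single]

@[simp] lemma sl2F_val (i j : Fin 2) : (sl2F F).val i j = if i = 1 ∧ j = 0 then 1 else 0 := by
  fin_cases i <;> fin_cases j <;> simp [sl2F, Matrix.single]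

@[simp] lemma sl2H_val (i j : Fin 2) :
    (sl2H F).val i j = if i = 0 ∧ j = 0 then 1 else if i = 1 ∧ j = 1 then -1 else 0 := by
  fin_cases i <;> fin_cases j <;> simp [sl2H, Matrix.single]

lemma sl2_val11 (X : sl (Fin 2) F) : X.val 1 1 = - X.val 0 0 := by
  have h : Matrix.trace X.val = 0 := X.2
  rw [Matrix.trace, Fin.sum_univ_two] at h
  simp only [Matrix.diag_apply] at h
  linear_combination h

@[simp] lemma sl2_add_val (X Y : sl (Fin 2) F) (i j : Fin 2) :
    (↑(X + Y) : Matrix (Fin 2) (Fin 2) F) i j = X.val i j + Y.val i j := rfl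

@[simp] lemma sl2_smul_val (c : F) (X : sl (Fin 2) F) (i j : Fin 2) :
    (↑(c • X) : Matrix (Fin 2) (Fin 2) F) i j = c * X.val i j := rfl

lemma sl2_bracket_val (X Y : sl (Fin 2) F) (i j : Fin 2) :
    (↑(⁅X, Y⁆ : sl (Fin 2) F) : Matrix (Fin 2) (Fin 2) F) i j
      = (X.val * Y.val - Y.val * X.val) i j := rfl

lemma sl2_decomp (X : sl (Fin 2) F) :
    X = X.val 0 1 • sl2E F + X.val 1 0 • sl2F F + X.val 0 0 • sl2H F := by
  apply Subtype.ext
  ext i j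
  have h := sl2_val11 X
  fin_cases i <;> fin_cases j <;> simp [h]

noncomputable def sl2Equiv : sl (Fin 2) F ≃ₗ[F] (Fin 3 → F) where
  toFun X := ![X.val 0 1, X.val 1 0, X.val 0 0]
  map_add' X Y := by funext i; fin_cases i <;> simp
  map_smul' c X := by funext i; fin_cases i <;> simp
  invFun v := v 0 • sl2E F + v 1 • sl2F F + v 2 • sl2H F
  left_inv X := (sl2_decomp X).symm
  right_inv v := by funext i; fin_cases i <;> simp

lemma sl2Equiv_apply (X : sl (Fin 2) F) : sl2Equiv X = ![X.val 0 1, X.val 1 0, X.val 0 0] := rfl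
lemma sl2Equiv_symm_apply (v : Fin 3 → F) :
    sl2Equiv.symm v = v 0 • sl2E F + v 1 • sl2F F + v 2 • sl2H F := rfl

noncomputable def sl2Basis : Module.Basis (Fin 3) F (sl (Fin 2) F) := Module.Basis.ofEquivFun sl2Equiv

lemma sl2_basis0 : (sl2Basis (F := F)) 0 = sl2E F := by
  simp [sl2Basis, Module.Basis.coe_ofEquivFun, sl2Equiv_symm_apply]
lemma sl2_basis1 : (sl2Basis (F := F)) 1 = sl2F F := by
  simp [sl2Basis, Module.Basis.coe_ofEquivFun, sl2Equiv_symm_apply]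
lemma sl2_basis2 : (sl2Basis (F := F)) 2 = sl2H F := by
  simp [sl2Basis, Module.Basis.coe_ofEquivFun, sl2Equiv_symm_apply]

lemma sl2_killing (X : sl (Fin 2) F) :
    killingForm F (sl (Fin 2) F) X X = 8 * (X.val 0 1 * X.val 1 0 + X.val 0 0 ^ 2) := by
  have h := sl2_val11 X
  rw [killingForm_apply_apply, LinearMap.trace_eq_matrix_trace F sl2Basis,
    Matrix.trace, Fin.sum_univ_three]
  simp only [Matrix.diag_apply, LinearMap.toMatrix_apply, sl2_basis0, sl2_basis1, sl2_basis2,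
    LinearMap.comp_apply, LieAlgebra.ad_apply]
  simp only [sl2Basis, Module.Basis.ofEquivFun_repr_apply]
  simp only [sl2Equiv_apply, Matrix.cons_val_zero, Matrix.cons_val_one,
    Matrix.head_cons, Matrix.cons_val_two, Matrix.tail_cons]
  simp only [sl2_bracket_val, Matrix.sub_apply, Matrix.mul_apply, Fin.sum_univ_two,
    sl2E_val, sl2F_val, sl2H_val]
  norm_num [Pi.single_apply, Fin.ext_iff]
  ring_nf
  rw [h]
  ring
end Aux

/-- A local automorphism of `sl₂` fixing `h` is either the diagonal automorphism
`e ↦ λe, f ↦ λ⁻¹f, h ↦ h` or the anti-automorphism `e ↦ μf, f ↦ μ⁻¹e, h ↦ h`. -/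
theorem localAut_sl2_fixing_h {F : Type*} [Field F] [CharZero F]
    [IsAlgClosed F]
    (Δ : sl (Fin 2) F →ₗ[F] sl (Fin 2) F)
    (hΔ : ∀ X : sl (Fin 2) F, ∃ φ : sl (Fin 2) F ≃ₗ⁅F⁆ sl (Fin 2) F, Δ X = φ X)
    (hfix : Δ (sl2H F) = sl2H F) :
    (∃ lam : F, lam ≠ 0 ∧ Δ (sl2E F) = lam • sl2E F ∧
      Δ (sl2F F) = lam⁻¹ • sl2F F ∧ Δ (sl2H F) = sl2H F) ∨
    (∃ mu : F, mu ≠ 0 ∧ Δ (sl2E F) = mu • sl2F F ∧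
      Δ (sl2F F) = mu⁻¹ • sl2E F ∧ Δ (sl2H F) = sl2H F) := by
  have hQ : ∀ X : sl (Fin 2) F,
      (Δ X).val 0 1 * (Δ X).val 1 0 + ((Δ X).val 0 0) ^ 2
        = X.val 0 1 * X.val 1 0 + (X.val 0 0) ^ 2 := by
    intro X
    obtain ⟨φ, hφ⟩ := hΔ X
    have h8 : (8 : F) ≠ 0 := by norm_num
    have hk := LieAlgebra.killingForm_of_equiv_apply φ X X
    rw [← hφ, sl2_killing, sl2_killing] at hk
    exact mul_left_cancel₀ h8 hk
  set a1 := (Δ (sl2E F)).val 0 1 with ha1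
  set b1 := (Δ (sl2E F)).val 1 0 with hb1
  set c1 := (Δ (sl2E F)).val 0 0 with hc1
  set a2 := (Δ (sl2F F)).val 0 1 with ha2
  set b2 := (Δ (sl2F F)).val 1 0 with hb2
  set c2 := (Δ (sl2F F)).val 0 0 with hc2
  have q1 : a1 * b1 + c1 ^ 2 = 0 := by
    have := hQ (sl2E F); simpa using this
  have q2 : a2 * b2 + c2 ^ 2 = 0 := by
    have := hQ (sl2F F); simpa using this
  have hEH : Δ (sl2E F + sl2H F) = Δ (sl2E F) + sl2H F := by rw [map_add, hfix]
  have hFH : Δ (sl2F F + sl2H F) = Δ (sl2F F) + sl2H F := by rw [map_add, hfix]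
  have hEF : Δ (sl2E F + sl2F F) = Δ (sl2E F) + Δ (sl2F F) := by rw [map_add]
  have q3 : a1 * b1 + (c1 + 1) ^ 2 = 1 := by
    have := hQ (sl2E F + sl2H F); rw [hEH] at this; simpa using this
  have q4 : a2 * b2 + (c2 + 1) ^ 2 = 1 := by
    have := hQ (sl2F F + sl2H F); rw [hFH] at this; simpa using this
  have q5 : (a1 + a2) * (b1 + b2) + (c1 + c2) ^ 2 = 1 := by
    have := hQ (sl2E F + sl2F F); rw [hEF] at this; simpa using this
  have hc1z : c1 = 0 := by linear_combination (q3 - q1) / 2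
  have hc2z : c2 = 0 := by linear_combination (q4 - q2) / 2
  have hab1 : a1 * b1 = 0 := by linear_combination q1 - c1 * hc1z - 0 * hc1z; 
  have hab2 : a2 * b2 = 0 := by linear_combination q2 - (c2 + 0) * hc2z
  have hcross : a1 * b2 + a2 * b1 = 1 := by
    linear_combination q5 - hab1 - hab2 - (c1 + c2) * hc1z - (c1 + c2) * hc2z
  have hDe := sl2_decomp (Δ (sl2E F))
  have hDf := sl2_decomp (Δ (sl2F F))
  rw [← ha1, ← hb1, ← hc1] at hDe
  rw [← ha2, ← hb2, ← hc2] at hDf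
  by_cases hb1z : b1 = 0
  · -- diagonal case
    have h12 : a1 * b2 = 1 := by linear_combination hcross - a2 * hb1z
    have ha1ne : a1 ≠ 0 := left_ne_zero_of_mul (h12.trans_ne one_ne_zero)
    have hb2v : b2 = a1⁻¹ := eq_inv_of_mul_eq_one_right h12
    have hb2ne : b2 ≠ 0 := right_ne_zero_of_mul (h12.trans_ne one_ne_zero)
    have ha2z : a2 = 0 := by
      rcases mul_eq_zero.mp hab2 with h | h
      · exact h
      · exact absurd h hb2ne
    left
    refine ⟨a1, ha1ne, ?_, ?_, hfix⟩
    · rw [hDe, hb1z, hc1z]; simp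
    · rw [hDf, ha2z, hb2v, hc2z]; simp
  · -- anti case
    have ha1z : a1 = 0 := by
      rcases mul_eq_zero.mp hab1 with h | h
      · exact h
      · exact absurd h hb1z
    have h21 : a2 * b1 = 1 := by linear_combination hcross - b2 * ha1z
    have ha2v : a2 = b1⁻¹ := eq_inv_of_mul_eq_one_left h21
    have ha2ne : a2 ≠ 0 := left_ne_zero_of_mul (h21.trans_ne one_ne_zero)
    have hb2z : b2 = 0 := by
      rcases mul_eq_zero.mp hab2 with h | h
      · exact absurd h ha2ne
      · exact h
    right
    refine ⟨b1, hb1z, ?_, ?_, hfix⟩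
    · rw [hDe, ha1z, hc1z]; simp
    · rw [hDf, ha2v, hb2z, hc2z]; simp
end

section
/- Let F be an algebraically closed field of characteristic zero. A linear map Δ : sl_2(F) → sl_2(F) is a local automorphism of sl_2(F) if and only if Δ is a Lie algebra automorphism or an anti-automorphism of sl_2(F); that is, LAut(sl_2(F)) = Aut^±(sl_2(F)). -/
open Matrix LieAlgebra.SpecialLinear

namespace SL2LocalAut

variable {F : Type*} [Field F] [CharZero F]

local notation "V" => sl (Fin 2) F

lemma val_smul' (r : F) (x : V) : ((r • x : V) : Matrix (Fin 2) (Fin 2) F) = r • (x : Matrix (Fin 2) (Fin 2) F) := rfl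

lemma mem_sl' (X : Matrix (Fin 2) (Fin 2) F) : X ∈ sl (Fin 2) F ↔ Matrix.trace X = 0 :=
  Iff.rfl

lemma val11 (x : V) : x.val 1 1 = - x.val 0 0 := by
  have h : Matrix.trace x.val = 0 := x.2
  rw [Matrix.trace_fin_two] at h
  linear_combination h

lemma sl_ext {x y : V} (h01 : x.val 0 1 = y.val 0 1) (h00 : x.val 0 0 = y.val 0 0)
    (h10 : x.val 1 0 = y.val 1 0) : x = y := by
  apply Subtype.ext
  ext i j
  fin_cases i <;> fin_cases j <;> simp_all [val11]

/-- coordinates: (a, b, c) = (x 0 1, x 0 0, x 1 0) -/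
noncomputable def coordL : V →ₗ[F] (Fin 3 → F) where
  toFun x := ![x.val 0 1, x.val 0 0, x.val 1 0]
  map_add' x y := by funext i; fin_cases i <;> simp
  map_smul' r x := by funext i; fin_cases i <;> simp [val_smul']

noncomputable def ofCoordL : (Fin 3 → F) →ₗ[F] V where
  toFun v := ⟨!![v 1, v 0; v 2, -(v 1)], by simp [mem_sl', Matrix.trace_fin_two]⟩
  map_add' v w := by apply sl_ext <;> simp <;> ring
  map_smul' r v := by apply sl_ext <;> simp [val_smul', Matrix.smul_apply] <;> ring

noncomputable def coordE : V ≃ₗ[F] (Fin 3 → F) :=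
  LinearEquiv.ofLinear coordL ofCoordL
    (by refine LinearMap.ext fun v => ?_; funext i; fin_cases i <;> simp [coordL, ofCoordL])
    (by refine LinearMap.ext fun x => ?_; apply sl_ext <;> simp [coordL, ofCoordL])

noncomputable def bV : Module.Basis (Fin 3) F V := Module.Basis.ofEquivFun coordE

lemma repr_eq (x : V) : ⇑(bV.repr x) = ![x.val 0 1, x.val 0 0, x.val 1 0] := by
  funext i
  simp [bV, Module.Basis.ofEquivFun_repr_apply, coordE, coordL]

lemma bV_val (i : Fin 3) : (bV (i : Fin 3) : V).val =
    ![!![(0:F),1;0,0], !![1,0;0,-1], !![0,0;1,0]] i := by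
  fin_cases i <;>
  · apply Matrix.ext; intro i j
    fin_cases i <;> fin_cases j <;> simp [bV, Module.Basis.coe_ofEquivFun, coordE, ofCoordL]


-- bracket entries
lemma bracket_val (x y : V) : (⁅x, y⁆ : V).val = x.val * y.val - y.val * x.val := rfl

lemma mul_entry (A B : Matrix (Fin 2) (Fin 2) F) (i j : Fin 2) :
    (A * B) i j = A i 0 * B 0 j + A i 1 * B 1 j := by
  simp [Matrix.mul_apply, Fin.sum_univ_two]

lemma br01 (x y : V) : (⁅x, y⁆ : V).val 0 1 =
    2 * (x.val 0 0 * y.val 0 1 - x.val 0 1 * y.val 0 0) := by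
  simp only [bracket_val, Matrix.sub_apply, mul_entry, val11]; ring

lemma br00 (x y : V) : (⁅x, y⁆ : V).val 0 0 =
    x.val 0 1 * y.val 1 0 - x.val 1 0 * y.val 0 1 := by
  simp only [bracket_val, Matrix.sub_apply, mul_entry, val11]; ring

lemma br10 (x y : V) : (⁅x, y⁆ : V).val 1 0 =
    2 * (x.val 1 0 * y.val 0 0 - x.val 0 0 * y.val 1 0) := by
  simp only [bracket_val, Matrix.sub_apply, mul_entry, val11]; ring

-- the matrix of ad x
lemma adMatrix (x : V) : LinearMap.toMatrix bV bV (LieAlgebra.ad F V x) =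
    !![2 * x.val 0 0, -2 * x.val 0 1, 0;
       -(x.val 1 0), 0, x.val 0 1;
       0, 2 * x.val 1 0, -2 * x.val 0 0] := by
  apply Matrix.ext; intro i j
  rw [LinearMap.toMatrix_apply]
  fin_cases i <;> fin_cases j <;>
    simp [LieAlgebra.ad_apply, repr_eq, br01, br00, br10, bV_val] <;> ring

lemma killing_eq (x y : V) : killingForm F V x y =
    8 * (x.val 0 0 * y.val 0 0) + 4 * (x.val 0 1 * y.val 1 0 + x.val 1 0 * y.val 0 1) := by
  rw [killingForm_apply_apply, LinearMap.trace_eq_matrix_trace F bV,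
    LinearMap.toMatrix_comp bV bV bV, adMatrix, adMatrix]
  simp [Matrix.trace_fin_three, mul_entry, Matrix.mul_apply, Fin.sum_univ_three]
  ring

lemma val_add' (x y : V) : ((x + y : V) : Matrix (Fin 2) (Fin 2) F) = x.val + y.val := rfl

lemma killing_nondeg (w : V) (h : ∀ z : V, killingForm F V w z = 0) : w = 0 := by
  have h0 := h (bV 0); have h1 := h (bV 1); have h2 := h (bV 2)
  rw [killing_eq] at h0 h1 h2
  simp [bV_val] at h0 h1 h2
  exact sl_ext (by simpa using h2) (by simpa using h1) (by simpa using h0)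

/-- Killing form in repr coordinates -/
lemma killing_repr (x y : V) : killingForm F V x y =
    8 * (bV.repr x 1 * bV.repr y 1) +
      4 * (bV.repr x 0 * bV.repr y 2 + bV.repr x 2 * bV.repr y 0) := by
  rw [killing_eq]
  simp [repr_eq]

/-- the Gram matrix of the Killing form -/
noncomputable def G : Matrix (Fin 3) (Fin 3) F := !![0,0,4;0,8,0;4,0,0]

section Forward

lemma repr_Δ (Δ : V →ₗ[F] V) (x : V) :
    ⇑(bV.repr (Δ x)) = (LinearMap.toMatrix bV bV Δ) *ᵥ ⇑(bV.repr x) :=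
  (LinearMap.toMatrix_mulVec_repr bV bV Δ x).symm

lemma reprΔb (Δ : V →ₗ[F] V) (i k : Fin 3) :
    bV.repr (Δ (bV i)) k = LinearMap.toMatrix bV bV Δ k i :=
  (LinearMap.toMatrix_apply bV bV Δ k i).symm

lemma polarize (Δ : V →ₗ[F] V) (hK : ∀ x : V, killingForm F V (Δ x) (Δ x) = killingForm F V x x)
    (x y : V) : killingForm F V (Δ x) (Δ y) = killingForm F V x y := by
  have hxy := hK (x + y)
  rw [map_add Δ x y] at hxy
  have hx := hK x
  have hy := hK y
  rw [killing_repr, killing_repr] at hx hy hxy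
  simp only [map_add, Finsupp.coe_add, Pi.add_apply] at hxy
  rw [killing_repr, killing_repr]
  linear_combination (hxy - hx - hy) / 2

lemma gram_rel (Δ : V →ₗ[F] V) (hK2 : ∀ x y : V, killingForm F V (Δ x) (Δ y) = killingForm F V x y) :
    (LinearMap.toMatrix bV bV Δ)ᵀ * G * (LinearMap.toMatrix bV bV Δ) =
      (G : Matrix (Fin 3) (Fin 3) F) := by
  ext i j
  have hij := hK2 (bV i) (bV j)
  rw [killing_repr, killing_repr] at hij
  simp only [reprΔb] at hij
  fin_cases i <;> fin_cases j <;>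
  · simp [G, Matrix.mul_apply, Fin.sum_univ_three, Module.Basis.repr_self,
      Finsupp.single_apply, Matrix.vecHead, Matrix.vecTail] at hij ⊢
    first
      | linear_combination hij
      | (simp [Matrix.vecHead, Matrix.vecTail]
         try linear_combination hij)

/-- the trilinear form as a determinant -/
lemma tri_det (x y z : V) : killingForm F V ⁅x, y⁆ z =
    -8 * Matrix.det (Matrix.of ![⇑(bV.repr x), ⇑(bV.repr y), ⇑(bV.repr z)]) := by
  rw [killing_eq]
  simp [Matrix.det_fin_three, repr_eq, br01, br00, br10]
  ring

lemma rows_mul (Δ : V →ₗ[F] V) (x y z : V) :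
    Matrix.of ![⇑(bV.repr (Δ x)), ⇑(bV.repr (Δ y)), ⇑(bV.repr (Δ z))] =
      Matrix.of ![⇑(bV.repr x), ⇑(bV.repr y), ⇑(bV.repr z)] *
        (LinearMap.toMatrix bV bV Δ)ᵀ := by
  ext i j
  fin_cases i <;>
    simp [repr_Δ, Matrix.mulVec, Matrix.mul_apply, dotProduct, Fin.sum_univ_three,
      mul_comm]

lemma tri_rel (Δ : V →ₗ[F] V) (x y z : V) :
    killingForm F V ⁅Δ x, Δ y⁆ (Δ z) =
      (LinearMap.toMatrix bV bV Δ).det * killingForm F V ⁅x, y⁆ z := by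
  rw [tri_det, tri_det, rows_mul, Matrix.det_mul, Matrix.det_transpose]
  ring

lemma detG : (G : Matrix (Fin 3) (Fin 3) F).det = -128 := by
  simp [G, Matrix.det_fin_three]
  norm_num

end Forward

section Conj

noncomputable def conjMap (g : Matrix (Fin 2) (Fin 2) F) (hg : IsUnit g.det) :
    V →ₗ[F] V where
  toFun x := ⟨g * x.val * g⁻¹, by
    rw [mem_sl', Matrix.trace_mul_cycle, Matrix.nonsing_inv_mul g hg, Matrix.one_mul]
    exact x.2⟩
  map_add' x y := by
    apply Subtype.ext
    show g * (x.val + y.val) * g⁻¹ = g * x.val * g⁻¹ + g * y.val * g⁻¹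
    rw [Matrix.mul_add, Matrix.add_mul]
  map_smul' r x := by
    apply Subtype.ext
    show g * (r • x.val) * g⁻¹ = r • (g * x.val * g⁻¹)
    rw [Matrix.mul_smul, Matrix.smul_mul]

lemma conjMap_val (g : Matrix (Fin 2) (Fin 2) F) (hg : IsUnit g.det) (x : V) :
    (conjMap g hg x).val = g * x.val * g⁻¹ := rfl

lemma cancel_inv (g : Matrix (Fin 2) (Fin 2) F) (hg : IsUnit g.det)
    (z : Matrix (Fin 2) (Fin 2) F) : g⁻¹ * (g * z) = z := by
  rw [← Matrix.mul_assoc, Matrix.nonsing_inv_mul g hg, Matrix.one_mul]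

noncomputable def conjHom (g : Matrix (Fin 2) (Fin 2) F) (hg : IsUnit g.det) :
    V →ₗ⁅F⁆ V :=
  { conjMap g hg with
    map_lie' := by
      intro x y
      apply Subtype.ext
      show g * (⁅x, y⁆ : V).val * g⁻¹ =
        (g * x.val * g⁻¹) * (g * y.val * g⁻¹) - (g * y.val * g⁻¹) * (g * x.val * g⁻¹)
      rw [bracket_val, Matrix.mul_sub, Matrix.sub_mul]
      simp only [Matrix.mul_assoc, cancel_inv g hg] }

lemma conjHom_leftinv (g : Matrix (Fin 2) (Fin 2) F) (hg : IsUnit g.det) (x : V) :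
    conjMap g⁻¹ (Matrix.isUnit_nonsing_inv_det g hg) (conjMap g hg x) = x := by
  apply Subtype.ext
  rw [conjMap_val, conjMap_val, Matrix.nonsing_inv_nonsing_inv g hg]
  simp only [Matrix.mul_assoc, cancel_inv g hg]
  rw [Matrix.nonsing_inv_mul g hg, Matrix.mul_one]

noncomputable def conjEquiv (g : Matrix (Fin 2) (Fin 2) F) (hg : IsUnit g.det) :
    V ≃ₗ⁅F⁆ V :=
  LieEquiv.ofBijective (conjHom g hg)
    ⟨Function.LeftInverse.injective (conjHom_leftinv g hg),
     fun y => ⟨conjMap g⁻¹ (Matrix.isUnit_nonsing_inv_det g hg) y, by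
      apply Subtype.ext
      show g * (g⁻¹ * y.val * g⁻¹⁻¹) * g⁻¹ = y.val
      rw [Matrix.nonsing_inv_nonsing_inv g hg, ← Matrix.mul_assoc, ← Matrix.mul_assoc,
        Matrix.mul_nonsing_inv g hg, Matrix.one_mul, Matrix.mul_assoc,
        Matrix.mul_nonsing_inv g hg, Matrix.mul_one]⟩⟩

lemma conjEquiv_neg (g : Matrix (Fin 2) (Fin 2) F) (hg : IsUnit g.det) {X : V}
    (hanti : g * X.val = -(X.val * g)) :
    conjEquiv g hg X = -X := by
  apply Subtype.ext
  show g * X.val * g⁻¹ = (-X : V).val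
  have hv : (-X : V).val = -(X.val) := rfl
  rw [hv, hanti, Matrix.neg_mul, Matrix.mul_assoc, Matrix.mul_nonsing_inv g hg,
    Matrix.mul_one]

lemma exists_neg_aut (X : V) : ∃ θ : V ≃ₗ⁅F⁆ V, θ X = -X := by
  by_cases hc : X.val 1 0 ≠ 0
  · refine ⟨conjEquiv !![X.val 1 0, -2 * X.val 0 0; 0, -(X.val 1 0)] ?_, conjEquiv_neg _ _ ?_⟩
    · rw [Matrix.det_fin_two_of]
      simpa using fun h => hc h
    · ext i j
      fin_cases i <;> fin_cases j <;> simp [mul_entry, val11] <;> ring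
  · by_cases ha : X.val 0 1 ≠ 0
    · refine ⟨conjEquiv !![X.val 0 1, 0; -2 * X.val 0 0, -(X.val 0 1)] ?_, conjEquiv_neg _ _ ?_⟩
      · rw [Matrix.det_fin_two_of]
        simpa using fun h => ha h
      · ext i j
        fin_cases i <;> fin_cases j <;> simp [mul_entry, val11] <;> ring
    · push_neg at hc ha
      refine ⟨conjEquiv !![(0:F), 1; 1, 0] ?_, conjEquiv_neg _ _ ?_⟩
      · rw [Matrix.det_fin_two_of]
        norm_num
      · ext i j
        fin_cases i <;> fin_cases j <;> simp [mul_entry, val11, hc, ha]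

end Conj

noncomputable def mkEquiv (Δ : V →ₗ[F] V) (hb : Function.Bijective Δ)
    (hm : ∀ x y : V, Δ ⁅x, y⁆ = ⁅Δ x, Δ y⁆) : V ≃ₗ⁅F⁆ V :=
  LieEquiv.ofBijective { Δ with map_lie' := fun {x y} => hm x y } hb

lemma mkEquiv_apply (Δ : V →ₗ[F] V) (hb) (hm) (x : V) : mkEquiv Δ hb hm x = Δ x := rfl

end SL2LocalAut

open SL2LocalAut Matrix

/-- A linear map on `sl₂` over an algebraically closed field of characteristic
zero is a local automorphism iff it is an automorphism or an anti-automorphism: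
`LAut(sl₂) = Aut^±(sl₂)`. -/
theorem localAut_sl2_iff_signedAut {F : Type*} [Field F] [CharZero F]
    [IsAlgClosed F]
    (Δ : sl (Fin 2) F →ₗ[F] sl (Fin 2) F) :
    (∀ X : sl (Fin 2) F, ∃ φ : sl (Fin 2) F ≃ₗ⁅F⁆ sl (Fin 2) F, Δ X = φ X) ↔
      (Function.Bijective Δ ∧
        ((∀ x y : sl (Fin 2) F, Δ ⁅x, y⁆ = ⁅Δ x, Δ y⁆) ∨
          (∀ x y : sl (Fin 2) F, Δ ⁅x, y⁆ = ⁅Δ y, Δ x⁆))) := by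
  constructor
  · intro hloc
    -- Killing form is preserved
    have hK : ∀ x : sl (Fin 2) F,
        killingForm F (sl (Fin 2) F) (Δ x) (Δ x) = killingForm F (sl (Fin 2) F) x x := by
      intro x
      obtain ⟨φ, hφ⟩ := hloc x
      rw [hφ]
      exact LieAlgebra.killingForm_of_equiv_apply φ x x
    have hK2 := polarize Δ hK
    have hG := gram_rel Δ hK2
    set M := LinearMap.toMatrix bV bV Δ with hM
    -- determinant is ±1
    have hdet : M.det ^ 2 = 1 := by
      have h1 : (Mᵀ * G * M).det = (G : Matrix (Fin 3) (Fin 3) F).det := by rw [hG]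
      rw [Matrix.det_mul, Matrix.det_mul, Matrix.det_transpose, detG] at h1
      have h128 : (128 : F) ≠ 0 := by norm_num
      field_simp at h1
      linear_combination -h1
    -- bijectivity
    have hunit : IsUnit M.det := by
      apply isUnit_iff_ne_zero.2
      intro h0
      rw [h0] at hdet
      simp at hdet
    have hbij : Function.Bijective Δ := by
      have hb := (LinearEquiv.ofIsUnitDet hunit).bijective
      have hc : ⇑(LinearEquiv.ofIsUnitDet hunit) = ⇑Δ := by
        funext x
        exact DFunLike.congr_fun (LinearEquiv.coe_ofIsUnitDet hunit) x
      rwa [hc] at hb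
    refine ⟨hbij, ?_⟩
    -- key bracket relation
    have key : ∀ x y : sl (Fin 2) F, ⁅Δ x, Δ y⁆ = M.det • Δ ⁅x, y⁆ := by
      intro x y
      have hsub : ∀ z : sl (Fin 2) F,
          killingForm F (sl (Fin 2) F) (⁅Δ x, Δ y⁆ - M.det • Δ ⁅x, y⁆) z = 0 := by
        intro z
        obtain ⟨w, rfl⟩ := hbij.2 z
        rw [map_sub, LinearMap.sub_apply, _root_.map_smul, LinearMap.smul_apply, smul_eq_mul,
          tri_rel, hK2, ← hM]
        ring
      have h0 := killing_nondeg _ hsub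
      rw [sub_eq_zero] at h0
      exact h0
    have hdd : ∀ v : sl (Fin 2) F, M.det • M.det • v = v := by
      intro v
      rw [smul_smul, ← sq, hdet, one_smul]
    have key' : ∀ x y : sl (Fin 2) F, Δ ⁅x, y⁆ = M.det • ⁅Δ x, Δ y⁆ := by
      intro x y
      rw [key, hdd]
    have hd1 : M.det = 1 ∨ M.det = -1 := by
      have : (M.det - 1) * (M.det + 1) = 0 := by linear_combination hdet
      rcases mul_eq_zero.1 this with h | h
      · exact Or.inl (sub_eq_zero.mp h)
      · exact Or.inr (eq_neg_of_add_eq_zero_left h)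
    rcases hd1 with h | h
    · left
      intro x y
      rw [key' x y, h, one_smul]
    · right
      intro x y
      rw [key' x y, h, neg_one_smul, lie_skew]
  · rintro ⟨hbij, hca | hca⟩
    · intro X
      exact ⟨mkEquiv Δ hbij hca, rfl⟩
    · intro X
      -- -Δ is an automorphism
      have hbij' : Function.Bijective (-Δ : sl (Fin 2) F →ₗ[F] sl (Fin 2) F) := by
        have : ⇑(-Δ : sl (Fin 2) F →ₗ[F] sl (Fin 2) F) = (fun v => -v) ∘ ⇑Δ := by
          funext v; simp
        rw [this]
        exact (neg_involutive.bijective).comp hbij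
      have hm' : ∀ x y : sl (Fin 2) F, (-Δ) ⁅x, y⁆ = ⁅(-Δ) x, (-Δ) y⁆ := by
        intro x y
        simp only [LinearMap.neg_apply, neg_lie, lie_neg, neg_neg]
        rw [hca, ← lie_skew, neg_neg]
      obtain ⟨θ, hθ⟩ := exists_neg_aut X
      refine ⟨θ.trans (mkEquiv (-Δ) hbij' hm'), ?_⟩
      show Δ X = mkEquiv (-Δ) hbij' hm' (θ X)
      rw [hθ, mkEquiv_apply]
      simp
end

section
/- Let F be an algebraically closed field of characteristic zero, n ≥ 3, and α ∈ F with α ≠ 0. Let T₁ = I + E_{1,n} + E_{n−1,1} + (α−1)E_{n−1,n−1} + E_{n,n−1} − E_{n,n}. Then T₁ is invertible and E_{1,n−1} T₁ = T₁ (E_{n,1} + α·E_{n,n−1}). -/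
open Matrix


section
variable {F : Type*} [Field F] {n : ℕ}

lemma sbm_smul (i j : Fin n) (x : F) :
    Matrix.single i j x = x • Matrix.single i j (1 : F) := by
  simp [Matrix.smul_single]

lemma aux_mul (a b c : Fin n) (hab : a ≠ b) (hac : a ≠ c) (hbc : b ≠ c) (α : F) :
    ((1 : Matrix (Fin n) (Fin n) F) + Matrix.single a c 1 + Matrix.single b a 1 +
      Matrix.single b b (α - 1) + Matrix.single c b 1 - Matrix.single c c 1) *
    ((1 : Matrix (Fin n) (Fin n) F) - Matrix.single a a 1 + Matrix.single a b 1 -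
      Matrix.single a c α - Matrix.single b b 1 + Matrix.single b c 1 +
      Matrix.single c a 1 - Matrix.single c b 1 + Matrix.single c c (α - 1)) = 1 := by
  simp only [mul_add, add_mul, mul_sub, sub_mul, Matrix.one_mul, Matrix.mul_one,
    Matrix.single_mul_single_same, Matrix.single_mul_single_of_ne, hab, hac, hbc, hab.symm, hac.symm,
    hbc.symm, ne_eq, not_false_iff, one_mul, mul_one]
  simp only [sbm_smul _ _ α, sbm_smul _ _ (α - 1), sbm_smul _ _ (α * 1 - 1 * 1)]
  module

lemma aux_eq (a b c : Fin n) (hab : a ≠ b) (hac : a ≠ c) (hbc : b ≠ c) (α : F) :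
    Matrix.single a b (1 : F) *
      ((1 : Matrix (Fin n) (Fin n) F) + Matrix.single a c 1 + Matrix.single b a 1 +
        Matrix.single b b (α - 1) + Matrix.single c b 1 - Matrix.single c c 1) =
    ((1 : Matrix (Fin n) (Fin n) F) + Matrix.single a c 1 + Matrix.single b a 1 +
        Matrix.single b b (α - 1) + Matrix.single c b 1 - Matrix.single c c 1) *
      (Matrix.single c a 1 + α • Matrix.single c b 1) := by
  simp only [Matrix.smul_single, smul_eq_mul, mul_one, mul_add, add_mul, mul_sub, sub_mul,
    Matrix.one_mul, Matrix.mul_one, Matrix.single_mul_single_same, Matrix.single_mul_single_of_ne,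
    hab, hac, hbc, hab.symm, hac.symm, hbc.symm, ne_eq, not_false_iff, one_mul, mul_one]
  simp only [sbm_smul _ _ α, sbm_smul _ _ (α - 1), sbm_smul _ _ (1 * α - 1 * 1),
    sbm_smul _ _ (α * 1 - 1 * 1)]
  module

lemma aux_unit (a b c : Fin n) (hab : a ≠ b) (hac : a ≠ c) (hbc : b ≠ c) (α : F) :
    IsUnit ((1 : Matrix (Fin n) (Fin n) F) + Matrix.single a c 1 + Matrix.single b a 1 +
      Matrix.single b b (α - 1) + Matrix.single c b 1 - Matrix.single c c 1) := by
  have h := aux_mul a b c hab hac hbc α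
  exact ⟨⟨_, _, h, mul_eq_one_comm.mp h⟩, rfl⟩
end

/-- The matrix `T₁ = I + E₁ₙ + Eₙ₋₁,₁ + (α−1)Eₙ₋₁,ₙ₋₁ + Eₙ,ₙ₋₁ − Eₙₙ` is
invertible and satisfies `E₁,ₙ₋₁ T₁ = T₁ (Eₙ₁ + α Eₙ,ₙ₋₁)`. -/
theorem T1_intertwines {F : Type*} [Field F] [CharZero F] [IsAlgClosed F]
    (n : ℕ) (hn : 3 ≤ n) (α : F) (hα : α ≠ 0) :
    IsUnit
      ((1 : Matrix (Fin n) (Fin n) F) +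
        Matrix.single ⟨0, by omega⟩ ⟨n - 1, by omega⟩ (1 : F) +
        Matrix.single ⟨n - 2, by omega⟩ ⟨0, by omega⟩ (1 : F) +
        Matrix.single ⟨n - 2, by omega⟩ ⟨n - 2, by omega⟩ (α - 1) +
        Matrix.single ⟨n - 1, by omega⟩ ⟨n - 2, by omega⟩ (1 : F) -
        Matrix.single ⟨n - 1, by omega⟩ ⟨n - 1, by omega⟩ (1 : F)) ∧
    Matrix.single ⟨0, by omega⟩ ⟨n - 2, by omega⟩ (1 : F) *
        ((1 : Matrix (Fin n) (Fin n) F) +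
          Matrix.single ⟨0, by omega⟩ ⟨n - 1, by omega⟩ (1 : F) +
          Matrix.single ⟨n - 2, by omega⟩ ⟨0, by omega⟩ (1 : F) +
          Matrix.single ⟨n - 2, by omega⟩ ⟨n - 2, by omega⟩ (α - 1) +
          Matrix.single ⟨n - 1, by omega⟩ ⟨n - 2, by omega⟩ (1 : F) -
          Matrix.single ⟨n - 1, by omega⟩ ⟨n - 1, by omega⟩ (1 : F)) =
      ((1 : Matrix (Fin n) (Fin n) F) +
          Matrix.single ⟨0, by omega⟩ ⟨n - 1, by omega⟩ (1 : F) +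
          Matrix.single ⟨n - 2, by omega⟩ ⟨0, by omega⟩ (1 : F) +
          Matrix.single ⟨n - 2, by omega⟩ ⟨n - 2, by omega⟩ (α - 1) +
          Matrix.single ⟨n - 1, by omega⟩ ⟨n - 2, by omega⟩ (1 : F) -
          Matrix.single ⟨n - 1, by omega⟩ ⟨n - 1, by omega⟩ (1 : F)) *
        (Matrix.single ⟨n - 1, by omega⟩ ⟨0, by omega⟩ (1 : F) +
          α • Matrix.single ⟨n - 1, by omega⟩ ⟨n - 2, by omega⟩ (1 : F)) := by
  have hab : (⟨0, by omega⟩ : Fin n) ≠ ⟨n - 2, by omega⟩ := by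
    simp only [ne_eq, Fin.mk.injEq]; omega
  have hac : (⟨0, by omega⟩ : Fin n) ≠ ⟨n - 1, by omega⟩ := by
    simp only [ne_eq, Fin.mk.injEq]; omega
  have hbc : (⟨n - 2, by omega⟩ : Fin n) ≠ ⟨n - 1, by omega⟩ := by
    simp only [ne_eq, Fin.mk.injEq]; omega
  exact ⟨aux_unit _ _ _ hab hac hbc α, aux_eq _ _ _ hab hac hbc α⟩
end
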